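/- Let T be the theory with rules E(x,y) ⇒ ∃z E(y,z) and R(x,y) ∧ E(x,x') ∧ E(y,z) ∧ E(z,y') ⇒ R(x',y'), and let D = {E(a_0,a_1), R(a_0,a_0)}. Then Chase(D,T) is the infinite E-chain a_0, a_1, a_2, … with exactly the atoms R(a_i, a_{2i}); in particular Chase(D,T) ⊭ ∃x∃y (E(x,y) ∧ R(y,y)). However, every finite model M of T and D satisfies ∃x∃y (E(x,y) ∧ R(y,y)). Hence T is not finitely controllable. -/

import Mathlib

/-!
A chase step either extends the `E`-chain by one fresh element or, through the datalog rule,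
turns `R(a_i, a_{2i})` into `R(a_{i+1}, a_{2i+2})`; hence the `n`-th chase level is explicit, and the
only loop `R(y, y)` is at `y = a_0`, which has no `E`-predecessor.

In a finite model, iterate a chosen `E`-successor function `s` from `a_0` to get `b_n = s^n(a_0)` with
`R(b_k, b_{2k})` for all `k`. Finiteness gives `k > 0` with `s^k (s^k a_0) = s^k a_0`, that is
`b_{2k} = b_k`, so `R(b_k, b_k)` and `E(b_{k-1}, b_k)`.
-/

namespace ChaseFW

/-- A signature of binary relation symbols. -/
structure Sig where
  Rel : Type

/-- A single-head existential TGD `Φ(x̄) ⇒ ∃z head(x_yvar, z)`: the witness is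
the second argument of the head predicate. -/
structure TGD (σ : Sig) where
  k : ℕ
  body : List (σ.Rel × Fin k × Fin k)
  yvar : Fin k
  head : σ.Rel

/-- A plain datalog rule `Φ(x̄) ⇒ headR(x_h1, x_h2)`. -/
structure DLog (σ : Sig) where
  k : ℕ
  body : List (σ.Rel × Fin k × Fin k)
  headR : σ.Rel
  h1 : Fin k
  h2 : Fin k

/-- A theory: existential TGDs and plain datalog rules. -/
structure Theory (σ : Sig) where
  tgds : Set (TGD σ)
  dls : Set (DLog σ)

/-- Elements of the chase: constants of the database, and witnesses
`c_{t, x̄}` created by a TGD `t` applied to a tuple `x̄`. -/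
inductive Elem (σ : Sig) (α : Type) where
  | base : α → Elem σ α
  | wit : TGD σ → List (Elem σ α) → Elem σ α

/-- A database instance: a set of ground atoms. -/
abbrev Inst (σ : Sig) (α : Type) := Set (σ.Rel × Elem σ α × Elem σ α)

variable {σ : Sig} {α : Type}

def satBody (I : Inst σ α) {k : ℕ} (body : List (σ.Rel × Fin k × Fin k))
    (v : Fin k → Elem σ α) : Prop :=
  ∀ a ∈ body, (a.1, v a.2.1, v a.2.2) ∈ I

/-- One step of the non-oblivious chase: apply all datalog rules, and create a
fresh witness for each TGD and tuple satisfying its body for which no witness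
already exists. -/
def step (T : Theory σ) (I : Inst σ α) : Inst σ α :=
  I ∪ {g | ∃ d ∈ T.dls, ∃ v : Fin d.k → Elem σ α,
        satBody I d.body v ∧ g = (d.headR, v d.h1, v d.h2)}
    ∪ {g | ∃ t ∈ T.tgds, ∃ v : Fin t.k → Elem σ α,
        satBody I t.body v ∧ (¬ ∃ z, (t.head, v t.yvar, z) ∈ I) ∧
        g = (t.head, v t.yvar, Elem.wit t (List.ofFn v))}

/-- `Chase^n(D, T)`. -/
def chaseN (T : Theory σ) (D : Inst σ α) : ℕ → Inst σ α
  | 0 => D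
  | n + 1 => step T (chaseN T D n)

/-- `Chase(D, T) = ⋃ n, Chase^n(D, T)`. -/
def chase (T : Theory σ) (D : Inst σ α) : Inst σ α := ⋃ n, chaseN T D n

/-- The set of elements (the domain) of an instance. -/
def elems (I : Inst σ α) : Set (Elem σ α) :=
  {e | ∃ g ∈ I, g.2.1 = e ∨ g.2.2 = e}

/-- Tuple generating predicates: those occurring in the head of some TGD. -/
def isTGP (T : Theory σ) (R : σ.Rel) : Prop := ∃ t ∈ T.tgds, t.head = R

/-- The skeleton of `Chase(D,T)`: all atoms of `D` and all TGP atoms. -/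
def skeleton (T : Theory σ) (D : Inst σ α) : Inst σ α :=
  D ∪ {g ∈ chase T D | isTGP T g.1}

/-- All elements of the database are constants. -/
def baseOnly (D : Inst σ α) : Prop :=
  ∀ g ∈ D, (∃ a, g.2.1 = Elem.base a) ∧ (∃ a, g.2.2 = Elem.base a)

/-- No TGP occurs in the head of a datalog rule. -/
def sep (T : Theory σ) : Prop := ∀ d ∈ T.dls, ¬ isTGP T d.headR

/-- Non-constant elements of the chase. -/
def nonBase : Elem σ α → Prop
  | .base _ => False
  | .wit _ _ => True

end ChaseFW

open ChaseFW

/-- The two relation symbols `E` and `R`. -/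
inductive RS where
  | E : RS
  | R : RS

def sig18 : ChaseFW.Sig := ⟨RS⟩

/-- `E(x,y) ⇒ ∃z E(y,z)`. -/
def tgd18 : TGD sig18 := ⟨2, [(RS.E, 0, 1)], 1, RS.E⟩

/-- `R(x,y) ∧ E(x,x') ∧ E(y,z) ∧ E(z,y') ⇒ R(x',y')`
(variables `x y x' z y'` numbered `0 1 2 3 4`). -/
def dl18 : DLog sig18 := ⟨5, [(RS.R, 0, 1), (RS.E, 0, 2), (RS.E, 1, 3), (RS.E, 3, 4)], RS.R, 2, 4⟩

def T18 : Theory sig18 := ⟨{tgd18}, {dl18}⟩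

/-- `D = {E(a_0,a_1), R(a_0,a_0)}`. -/
def D18 : Inst sig18 (Fin 2) :=
  {(RS.E, Elem.base 0, Elem.base 1), (RS.R, Elem.base 0, Elem.base 0)}

/-- A model of a theory of TGDs and datalog rules. -/
structure TModel (σ : ChaseFW.Sig) where
  Dom : Type
  rel : σ.Rel → Dom → Dom → Prop

def TModel.satT {σ : ChaseFW.Sig} (M : TModel σ) (T : Theory σ) : Prop :=
  (∀ t ∈ T.tgds, ∀ v : Fin t.k → M.Dom,
    (∀ a ∈ t.body, M.rel a.1 (v a.2.1) (v a.2.2)) →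
    ∃ z, M.rel t.head (v t.yvar) z) ∧
  (∀ d ∈ T.dls, ∀ v : Fin d.k → M.Dom,
    (∀ a ∈ d.body, M.rel a.1 (v a.2.1) (v a.2.2)) →
    M.rel d.headR (v d.h1) (v d.h2))

open Function in
theorem exists_pos_iterate_iterate_eq {β : Type*} [Finite β] (f : β → β) (x : β) :
    ∃ k, 0 < k ∧ f^[k] (f^[k] x) = f^[k] x := by
  obtain ⟨m, n, hne, hmn⟩ := Finite.exists_ne_map_eq_of_infinite (fun n => f^[n] x)
  wlog hlt : m < n generalizing m n
  · exact this n m hne.symm hmn.symm (by omega)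
  have hper : IsPeriodicPt f (n - m) (f^[m] x) := by
    simp only [IsPeriodicPt, IsFixedPt, ← iterate_add_apply, Nat.sub_add_cancel hlt.le]
    exact hmn.symm
  -- a multiple of the period `n - m` that is at least the preperiod `m`
  obtain ⟨d, hd⟩ : ∃ d, (n - m) * (m + 1) = d + m :=
    ⟨_, (Nat.sub_add_cancel ((m.le_succ).trans
      (Nat.le_mul_of_pos_left _ (Nat.sub_pos_of_lt hlt)))).symm⟩
  refine ⟨(n - m) * (m + 1), Nat.mul_pos (by omega) (by omega), ?_⟩
  rw [hd, iterate_add_apply f d m x, ← hd]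
  exact ((hper.apply_iterate d).mul_const (m + 1)).eq

theorem exists_E_R_self_of_finite {β : Type*} [Finite β] {E R : β → β → Prop}
    (hE : ∀ x y, E x y → ∃ z, E y z)
    (hR : ∀ x y x' z y', R x y → E x x' → E y z → E z y' → R x' y')
    {a₀ a₁ : β} (h₀₁ : E a₀ a₁) (h₀₀ : R a₀ a₀) : ∃ x y, E x y ∧ R y y := by
  classical
  let next : β → β := fun y => if h : ∃ z, E y z then h.choose else y
  have hnext : ∀ y, (∃ z, E y z) → E y (next y) := fun y hy => by
    simp only [next, dif_pos hy]
    exact hy.choose_spec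
  set b : ℕ → β := fun n => next^[n] a₀
  have hb : ∀ n, E (b n) (b (n + 1)) := by
    intro n
    induction n with
    | zero => exact hnext a₀ ⟨a₁, h₀₁⟩
    | succ n ih =>
      rw [show b (n + 2) = next (b (n + 1)) from Function.iterate_succ_apply' ..]
      exact hnext _ (hE _ _ ih)
  have hRb : ∀ k, R (b k) (b (2 * k)) := by
    intro k
    induction k with
    | zero => exact h₀₀
    | succ k ih => exact hR _ _ _ _ _ ih (hb k) (hb (2 * k)) (hb (2 * k + 1))
  obtain ⟨k, hk, hkk⟩ := exists_pos_iterate_iterate_eq next a₀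
  have h2k : b (2 * k) = b k := by
    simp only [b, two_mul, Function.iterate_add_apply, hkk]
  obtain ⟨j, rfl⟩ : ∃ j, k = j + 1 := ⟨k - 1, by omega⟩
  exact ⟨b j, b (j + 1), hb j, h2k ▸ hRb (j + 1)⟩

theorem forall_mem_tgd18_body {P : RS × Fin 2 × Fin 2 → Prop} :
    (∀ a ∈ tgd18.body, P a) ↔ P (RS.E, 0, 1) :=
  List.forall_mem_singleton

theorem forall_mem_dl18_body {P : RS × Fin 5 × Fin 5 → Prop} :
    (∀ a ∈ dl18.body, P a) ↔ P (RS.R, 0, 1) ∧ P (RS.E, 0, 2) ∧ P (RS.E, 1, 3) ∧ P (RS.E, 3, 4) := by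
  -- `sig18.Rel` is not reducibly `RS`, so `simp` only sees the list once it is retyped
  change (∀ a ∈ ([(RS.R, 0, 1), (RS.E, 0, 2), (RS.E, 1, 3), (RS.E, 3, 4)] :
    List (RS × Fin 5 × Fin 5)), P a) ↔ _
  simp only [List.forall_mem_cons, List.not_mem_nil, IsEmpty.forall_iff, implies_true, and_true]

theorem mem_step_T18 {α : Type} {I : Inst sig18 α} {g : RS × Elem sig18 α × Elem sig18 α} :
    g ∈ step T18 I ↔ g ∈ I ∨
      (∃ x y x' z y', (RS.R, x, y) ∈ I ∧ (RS.E, x, x') ∈ I ∧ (RS.E, y, z) ∈ I ∧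
        (RS.E, z, y') ∈ I ∧ g = (RS.R, x', y')) ∨
      (∃ x y, (RS.E, x, y) ∈ I ∧ (¬ ∃ z, (RS.E, y, z) ∈ I) ∧
        g = (RS.E, y, Elem.wit tgd18 [x, y])) := by
  change (g ∈ I ∨ (∃ d ∈ ({dl18} : Set (DLog sig18)), _)) ∨ (∃ t ∈ ({tgd18} : Set (TGD sig18)), _) ↔ _
  simp only [Set.mem_singleton_iff, exists_eq_left, or_assoc]
  constructor
  · rintro (hg | ⟨v, hv, rfl⟩ | ⟨(v : Fin 2 → Elem sig18 α), hv, hfresh, rfl⟩)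
    · exact .inl hg
    · obtain ⟨h₁, h₂, h₃, h₄⟩ := forall_mem_dl18_body.1 hv
      exact .inr (.inl ⟨_, _, _, _, _, h₁, h₂, h₃, h₄, rfl⟩)
    · exact .inr (.inr ⟨v 0, v 1, forall_mem_tgd18_body.1 hv, hfresh, rfl⟩)
  · rintro (hg | ⟨x, y, x', z, y', h₁, h₂, h₃, h₄, rfl⟩ | ⟨x, y, hxy, hfresh, rfl⟩)
    · exact .inl hg
    · exact .inr (.inl ⟨![x, y, x', z, y'], forall_mem_dl18_body.2 ⟨h₁, h₂, h₃, h₄⟩, rfl⟩)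
    · exact .inr (.inr ⟨![x, y], forall_mem_tgd18_body.2 hxy, hfresh, rfl⟩)

theorem TModel.satT_T18_iff {M : TModel sig18} :
    M.satT T18 ↔ (∀ x y, M.rel RS.E x y → ∃ z, M.rel RS.E y z) ∧
      ∀ x y x' z y', M.rel RS.R x y → M.rel RS.E x x' → M.rel RS.E y z → M.rel RS.E z y' →
        M.rel RS.R x' y' := by
  change (∀ t ∈ ({tgd18} : Set (TGD sig18)), _) ∧ (∀ d ∈ ({dl18} : Set (DLog sig18)), _) ↔ _
  simp only [Set.mem_singleton_iff, forall_eq]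
  constructor
  · rintro ⟨hE, hR⟩
    exact ⟨fun x y h => hE ![x, y] (forall_mem_tgd18_body.2 h),
      fun x y x' z y' h₁ h₂ h₃ h₄ => hR ![x, y, x', z, y'] (forall_mem_dl18_body.2 ⟨h₁, h₂, h₃, h₄⟩)⟩
  · rintro ⟨hE, hR⟩
    refine ⟨fun (v : Fin 2 → M.Dom) hv => hE _ _ (forall_mem_tgd18_body.1 hv),
      fun (v : Fin 5 → M.Dom) hv => ?_⟩
    obtain ⟨h₁, h₂, h₃, h₄⟩ := forall_mem_dl18_body.1 hv
    exact hR _ _ _ _ _ h₁ h₂ h₃ h₄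

def chainElem : ℕ → Elem sig18 (Fin 2)
  | 0 => .base 0
  | 1 => .base 1
  | n + 2 => .wit tgd18 [chainElem n, chainElem (n + 1)]

def chainIndex : Elem sig18 (Fin 2) → ℕ
  | .base a => a
  | .wit _ [_, b] => chainIndex b + 1
  | .wit _ _ => 0

theorem chainIndex_chainElem : ∀ n, chainIndex (chainElem n) = n
  | 0 => rfl
  | 1 => rfl
  | n + 2 => by simp only [chainElem, chainIndex, chainIndex_chainElem (n + 1)]

theorem chainElem_injective : Function.Injective chainElem :=
  Function.LeftInverse.injective chainIndex_chainElem

def chaseLevel (n : ℕ) : Inst sig18 (Fin 2) :=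
  {g | ∃ i ≤ n, g = (RS.E, chainElem i, chainElem (i + 1))} ∪
    {g | ∃ i, 2 * i ≤ n ∧ g = (RS.R, chainElem i, chainElem (2 * i))}

section chaseLevel
variable {n : ℕ} {x y : Elem sig18 (Fin 2)}

theorem E_mem_chaseLevel_iff :
    (RS.E, x, y) ∈ chaseLevel n ↔ ∃ i ≤ n, x = chainElem i ∧ y = chainElem (i + 1) := by
  constructor
  · rintro (⟨i, hi, ⟨⟩⟩ | ⟨i, -, ⟨⟩⟩)
    exact ⟨i, hi, rfl, rfl⟩
  · rintro ⟨i, hi, rfl, rfl⟩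
    exact .inl ⟨i, hi, rfl⟩

theorem R_mem_chaseLevel_iff :
    (RS.R, x, y) ∈ chaseLevel n ↔ ∃ i, 2 * i ≤ n ∧ x = chainElem i ∧ y = chainElem (2 * i) := by
  constructor
  · rintro (⟨i, -, ⟨⟩⟩ | ⟨i, hi, ⟨⟩⟩)
    exact ⟨i, hi, rfl, rfl⟩
  · rintro ⟨i, hi, rfl, rfl⟩
    exact .inr ⟨i, hi, rfl⟩

theorem chaseLevel_mono : Monotone chaseLevel := by
  intro m n hmn
  rintro g (⟨i, hi, rfl⟩ | ⟨i, hi, rfl⟩)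
  · exact .inl ⟨i, hi.trans hmn, rfl⟩
  · exact .inr ⟨i, hi.trans hmn, rfl⟩

theorem chaseLevel_zero : chaseLevel 0 = D18 := by
  ext g
  constructor
  · rintro (⟨i, hi, rfl⟩ | ⟨i, hi, rfl⟩)
    · obtain rfl : i = 0 := Nat.le_zero.1 hi
      exact .inl rfl
    · obtain rfl : i = 0 := by omega
      exact .inr rfl
  · rintro (rfl | rfl)
    · exact .inl ⟨0, le_rfl, rfl⟩
    · exact .inr ⟨0, le_rfl, rfl⟩

theorem step_chaseLevel_subset : step T18 (chaseLevel n) ⊆ chaseLevel (n + 1) := by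
  intro g hg
  rcases mem_step_T18.1 hg with hg | ⟨x, y, x', z, y', h₁, h₂, h₃, h₄, rfl⟩ | ⟨x, y, hxy, hfresh, rfl⟩
  · exact chaseLevel_mono n.le_succ hg
  · obtain ⟨i, hi, rfl, rfl⟩ := R_mem_chaseLevel_iff.1 h₁
    obtain ⟨j, -, hj, rfl⟩ := E_mem_chaseLevel_iff.1 h₂
    obtain ⟨k, -, hk, rfl⟩ := E_mem_chaseLevel_iff.1 h₃
    obtain ⟨l, hl, hl', rfl⟩ := E_mem_chaseLevel_iff.1 h₄
    cases chainElem_injective hj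
    cases chainElem_injective hk
    cases chainElem_injective hl'
    exact R_mem_chaseLevel_iff.2 ⟨i + 1, by omega, rfl, rfl⟩
  · obtain ⟨i, hi, rfl, rfl⟩ := E_mem_chaseLevel_iff.1 hxy
    obtain rfl : i = n := by
      by_contra hin
      exact hfresh ⟨_, E_mem_chaseLevel_iff.2 ⟨i + 1, by omega, rfl, rfl⟩⟩
    exact E_mem_chaseLevel_iff.2 ⟨i + 1, le_rfl, rfl, rfl⟩

theorem chaseLevel_succ_subset_step : chaseLevel (n + 1) ⊆ step T18 (chaseLevel n) := by
  rintro g (⟨i, hi, rfl⟩ | ⟨i, hi, rfl⟩)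
  · rcases hi.lt_or_eq with hi | rfl
    · exact mem_step_T18.2 (.inl (E_mem_chaseLevel_iff.2 ⟨i, by omega, rfl, rfl⟩))
    refine mem_step_T18.2 (.inr (.inr ⟨chainElem n, chainElem (n + 1),
      E_mem_chaseLevel_iff.2 ⟨n, le_rfl, rfl, rfl⟩, ?_, rfl⟩))
    rintro ⟨z, hz⟩
    obtain ⟨j, hj, hj', -⟩ := E_mem_chaseLevel_iff.1 hz
    cases chainElem_injective hj'
    omega
  · rcases (show 2 * i ≤ n ∨ 2 * i = n + 1 by omega) with hi | hi
    · exact mem_step_T18.2 (.inl (R_mem_chaseLevel_iff.2 ⟨i, hi, rfl, rfl⟩))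
    obtain ⟨j, rfl⟩ : ∃ j, i = j + 1 := ⟨i - 1, by omega⟩
    exact mem_step_T18.2 (.inr (.inl ⟨_, _, _, _, _,
      R_mem_chaseLevel_iff.2 ⟨j, by omega, rfl, rfl⟩,
      E_mem_chaseLevel_iff.2 ⟨j, by omega, rfl, rfl⟩,
      E_mem_chaseLevel_iff.2 ⟨2 * j, by omega, rfl, rfl⟩,
      E_mem_chaseLevel_iff.2 ⟨2 * j + 1, by omega, rfl, rfl⟩, rfl⟩))

end chaseLevel

theorem chaseN_T18_D18 : ∀ n, chaseN T18 D18 n = chaseLevel n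
  | 0 => chaseLevel_zero.symm
  | n + 1 => by
    rw [chaseN, chaseN_T18_D18 n]
    exact step_chaseLevel_subset.antisymm chaseLevel_succ_subset_step

theorem chase_T18_D18_eq_iUnion : chase T18 D18 = ⋃ n, chaseLevel n := by
  simp only [chase, chaseN_T18_D18]

theorem chase_T18_D18 : chase T18 D18 =
    {g | ∃ i : ℕ, g = (RS.E, chainElem i, chainElem (i + 1))} ∪
      {g | ∃ i : ℕ, g = (RS.R, chainElem i, chainElem (2 * i))} := by
  ext g
  rw [chase_T18_D18_eq_iUnion, Set.mem_iUnion]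
  constructor
  · rintro ⟨n, ⟨i, -, rfl⟩ | ⟨i, -, rfl⟩⟩
    exacts [.inl ⟨i, rfl⟩, .inr ⟨i, rfl⟩]
  · rintro (⟨i, rfl⟩ | ⟨i, rfl⟩)
    exacts [⟨i, .inl ⟨i, le_rfl, rfl⟩⟩, ⟨2 * i, .inr ⟨i, le_rfl, rfl⟩⟩]

theorem not_exists_E_R_self_chase_T18_D18 : ¬ ∃ x y : Elem sig18 (Fin 2),
    (RS.E, x, y) ∈ chase T18 D18 ∧ (RS.R, y, y) ∈ chase T18 D18 := by
  rintro ⟨x, y, hE, hR⟩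
  rw [chase_T18_D18_eq_iUnion] at hE hR
  obtain ⟨m, hE⟩ := Set.mem_iUnion.1 hE
  obtain ⟨n, hR⟩ := Set.mem_iUnion.1 hR
  obtain ⟨i, -, rfl, hi⟩ := R_mem_chaseLevel_iff.1 hR
  obtain ⟨j, -, -, hj⟩ := E_mem_chaseLevel_iff.1 hE
  have hi0 : i = 0 := by have := chainElem_injective hi; omega
  have := chainElem_injective (hi0 ▸ hj)
  omega

/-- `Chase(D,T)` is the infinite `E`-chain `a_0, a_1, …` with
exactly the extra atoms `R(a_i, a_{2i})`; in particular it does not satisfy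
`∃x∃y (E(x,y) ∧ R(y,y))`. Yet every finite model of `T` and `D` satisfies
`∃x∃y (E(x,y) ∧ R(y,y))`. Hence `T` is not finitely controllable. -/
theorem stmt_18 :
    (∃ f : ℕ → Elem sig18 (Fin 2), Function.Injective f ∧
      f 0 = Elem.base 0 ∧ f 1 = Elem.base 1 ∧
      chase T18 D18 =
        {g | ∃ i : ℕ, g = (RS.E, f i, f (i + 1))} ∪
        {g | ∃ i : ℕ, g = (RS.R, f i, f (2 * i))}) ∧
    (¬ ∃ x y : Elem sig18 (Fin 2),
      (RS.E, x, y) ∈ chase T18 D18 ∧ (RS.R, y, y) ∈ chase T18 D18) ∧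
    (∀ M : TModel sig18, Finite M.Dom → M.satT T18 →
      ∀ ι : Fin 2 → M.Dom, M.rel RS.E (ι 0) (ι 1) → M.rel RS.R (ι 0) (ι 0) →
      ∃ x y : M.Dom, M.rel RS.E x y ∧ M.rel RS.R y y) := by
  refine ⟨⟨chainElem, chainElem_injective, rfl, rfl, chase_T18_D18⟩,
    not_exists_E_R_self_chase_T18_D18, fun M _ hM ι hE hR => ?_⟩
  obtain ⟨hsucc, hstep⟩ := TModel.satT_T18_iff.1 hM
  exact exists_E_R_self_of_finite hsucc hstep hE hR
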